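/- arXiv:1604.08585 — 2 statements merged into one kernel-verified Lean document; each statement's English description precedes it below -/
import Mathlib

section
/- Let S be a semigroup in which every element has at least one inverse, i.e. for every x ∈ S there exists y ∈ S with x·y·x = x and y·x·y = y. Then every element of S has a unique such inverse if and only if any two idempotents of S commute. -/
/-- Vagner's theorem: in a semigroup where every element has at least one inverse,
inverses are unique if and only if any two idempotents commute. -/
theorem vagner {S : Type*} [Semigroup S]
    (h : ∀ x : S, ∃ y : S, x * y * x = x ∧ y * x * y = y) :
    (∀ x : S, ∃! y : S, x * y * x = x ∧ y * x * y = y) ↔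
      (∀ e f : S, e * e = e → f * f = f → e * f = f * e) := by
  constructor
  · intro hu
    -- Step 1: the product of two idempotents is idempotent.
    have key : ∀ e f : S, e * e = e → f * f = f → (e*f)*(e*f) = e*f := by
      intro e f he hf
      obtain ⟨y, hy1, hy2⟩ := h (e*f)
      have he2 : ∀ x : S, e*(e*x) = e*x := fun x => by rw [← mul_assoc, he]
      have hf2 : ∀ x : S, f*(f*x) = f*x := fun x => by rw [← mul_assoc, hf]
      have hy1' : e*(f*(y*(e*f))) = e*f := by
        have := hy1; simp only [mul_assoc] at this ⊢; exact this
      have hy2' : y*(e*(f*y)) = y := by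
        have := hy2; simp only [mul_assoc] at this ⊢; exact this
      have hy2e : ∀ z : S, y*(e*(f*(y*z))) = y*z := fun z => by
        have := congrArg (· * z) hy2
        simp only [mul_assoc] at this
        exact this
      set g := f*y*e with hg
      have hgg : g * g = g := by
        rw [hg]; simp only [mul_assoc, hy2e]
      have hA : (e*f)*g*(e*f) = e*f := by
        rw [hg]; simp only [mul_assoc, he2, hf2]; exact hy1'
      have hB : g*(e*f)*g = g := by
        rw [hg]; simp only [mul_assoc, he2, hf2, hy2e]
      obtain ⟨w, -, huniq⟩ := hu g
      have h1 : e*f = w := huniq (e*f) ⟨hB, hA⟩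
      have h2 : g = w := huniq g ⟨by rw [hgg, hgg], by rw [hgg, hgg]⟩
      have heg : e*f = g := h1.trans h2.symm
      rw [heg, hgg]
    intro e f he hf
    have h1 := key e f he hf
    have h2 := key f e hf he
    have he2 : ∀ x : S, e*(e*x) = e*x := fun x => by rw [← mul_assoc, he]
    have hf2 : ∀ x : S, f*(f*x) = f*x := fun x => by rw [← mul_assoc, hf]
    obtain ⟨w, -, huniq⟩ := hu (e*f)
    have ha : e*f = w := huniq (e*f) ⟨by rw [h1, h1], by rw [h1, h1]⟩
    have hinv1 : (e*f)*(f*e)*(e*f) = e*f := by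
      have := h1; simp only [mul_assoc] at this ⊢
      simp only [he2, hf2]; exact this
    have hinv2 : (f*e)*(e*f)*(f*e) = f*e := by
      have := h2; simp only [mul_assoc] at this ⊢
      simp only [he2, hf2]; exact this
    have hb : f*e = w := huniq (f*e) ⟨hinv1, hinv2⟩
    exact ha.trans hb.symm
  · intro hcomm x
    obtain ⟨y, hy1, hy2⟩ := h x
    refine ⟨y, ⟨hy1, hy2⟩, ?_⟩
    rintro z ⟨hz1, hz2⟩
    have e1 : (y*x)*(y*x) = y*x := by rw [← mul_assoc, hy2]
    have e2 : (z*x)*(z*x) = z*x := by rw [← mul_assoc, hz2]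
    have e3 : (x*y)*(x*y) = x*y := by rw [← mul_assoc, hy1]
    have e4 : (x*z)*(x*z) = x*z := by rw [← mul_assoc, hz1]
    have hc1 := hcomm (y*x) (z*x) e1 e2
    have hc2 := hcomm (x*y) (x*z) e3 e4
    have hy2' : y*(x*y) = y := by rw [← mul_assoc, hy2]
    have key1 : y = z*x*y := by
      calc y = y*x*y := hy2.symm
      _ = y*(x*z*x)*y := by rw [hz1]
      _ = (y*x)*(z*x)*y := by simp only [mul_assoc]
      _ = (z*x)*(y*x)*y := by rw [hc1]
      _ = z*x*y := by simp only [mul_assoc]; rw [hy2']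
    have key2 : z = z*x*y := by
      calc z = z*x*z := hz2.symm
      _ = z*(x*y*x)*z := by rw [hy1]
      _ = z*((x*y)*(x*z)) := by simp only [mul_assoc]
      _ = z*((x*z)*(x*y)) := by rw [hc2]
      _ = (z*x*z)*(x*y) := by simp only [mul_assoc]
      _ = z*x*y := by rw [hz2, ← mul_assoc]
    exact key2.trans key1.symm
end

section
/- Let S be an inverse semigroup with a zero element 0 in which all nonzero idempotents are mutually orthogonal (any two distinct nonzero idempotents multiply to 0). If x, y, z ∈ S satisfy x·y ≠ 0 and y·z ≠ 0, then x·y·z ≠ 0. Consequently, the multiplication of S restricts to a well-defined partially associative composition on S \ {0}. -/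
/-- In an inverse semigroup with zero whose nonzero idempotents are mutually orthogonal,
if `x * y ≠ 0` and `y * z ≠ 0` then `x * y * z ≠ 0`. -/
theorem mul_mul_ne_zero {S : Type*} [SemigroupWithZero S] (star : S → S)
    (hinv : ∀ x : S, x * star x * x = x ∧ star x * x * star x = star x)
    (huniq : ∀ x y : S, x * y * x = x → y * x * y = y → y = star x)
    (horth : ∀ e f : S, e * e = e → f * f = f → e ≠ 0 → f ≠ 0 → e ≠ f → e * f = 0) :
    ∀ x y z : S, x * y ≠ 0 → y * z ≠ 0 → x * y * z ≠ 0 := by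
  intro x y z hxy hyz
  obtain ⟨hx1, hx2⟩ := hinv x
  obtain ⟨hy1, hy2⟩ := hinv y
  obtain ⟨hz1, hz2⟩ := hinv z
  set sx := star x
  set sy := star y
  set sz := star z
  -- the four idempotents
  have he : (sx * x) * (sx * x) = sx * x := by
    calc sx * x * (sx * x) = (sx * x * sx) * x := by simp [mul_assoc]
      _ = sx * x := by rw [hx2]
  have hf : (y * sy) * (y * sy) = y * sy := by
    calc y * sy * (y * sy) = (y * sy * y) * sy := by simp [mul_assoc]
      _ = y * sy := by rw [hy1]
  have hg : (sy * y) * (sy * y) = sy * y := by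
    calc sy * y * (sy * y) = (sy * y * sy) * y := by simp [mul_assoc]
      _ = sy * y := by rw [hy2]
  have hh : (z * sz) * (z * sz) = z * sz := by
    calc z * sz * (z * sz) = (z * sz * z) * sz := by simp [mul_assoc]
      _ = z * sz := by rw [hz1]
  -- from x*y ≠ 0 : sx*x = y*sy and both are nonzero
  have key1 : x * y = x * ((sx * x) * (y * sy)) * y := by
    conv_lhs => rw [← hx1, ← hy1]
    simp [mul_assoc]
  have efne : (sx * x) * (y * sy) ≠ 0 := fun h => hxy (by rw [key1, h, mul_zero, zero_mul])
  have ene : sx * x ≠ 0 := fun h => efne (by rw [h, zero_mul])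
  have fne : y * sy ≠ 0 := fun h => efne (by rw [h, mul_zero])
  have hef : sx * x = y * sy := by
    by_contra hne
    exact efne (horth _ _ he hf ene fne hne)
  -- from y*z ≠ 0 : sy*y = z*sz and both are nonzero
  have key2 : y * z = y * ((sy * y) * (z * sz)) * z := by
    conv_lhs => rw [← hy1, ← hz1]
    simp [mul_assoc]
  have ghne : (sy * y) * (z * sz) ≠ 0 := fun h => hyz (by rw [key2, h, mul_zero, zero_mul])
  have gne : sy * y ≠ 0 := fun h => ghne (by rw [h, zero_mul])
  have hgh : sy * y = z * sz := by
    by_contra hne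
    exact ghne (horth _ _ hg hh gne (fun h => ghne (by rw [h, mul_zero])) hne)
  have hne0 : z * sz ≠ 0 := hgh ▸ gne
  -- key computation
  have final : sy * sx * (x * y * z) * sz = z * sz := by
    calc sy * sx * (x * y * z) * sz
        = (sy * (sx * x) * y) * (z * sz) := by simp [mul_assoc]
      _ = (sy * (y * sy) * y) * (z * sz) := by rw [hef]
      _ = (sy * y * sy * y) * (z * sz) := by simp [mul_assoc]
      _ = (sy * y) * (z * sz) := by rw [hy2]
      _ = (z * sz) * (z * sz) := by rw [hgh]
      _ = z * sz := hh
  intro h0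
  exact hne0 (by rw [← final, h0, mul_zero, zero_mul])
end
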